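/- Let W ∈ L(H) be a positive operator, S ⊆ H a closed subspace, and T the shorted operator of W to S. Then the pair (W, ker T) is compatible if and only if T is the maximum of M⁻(W,S) with respect to the minus order, i.e. T ∈ M⁻(W,S) and X ⁻≤ T for every X ∈ M⁻(W,S). -/

import Mathlib

open ContinuousLinearMap
open scoped ComplexInnerProductSpace

noncomputable section

variable {H : Type*} [NormedAddCommGroup H] [InnerProductSpace ℂ H] [CompleteSpace H]

/-- `M(W,S)`: the set of operators `X` with `0 ≤ X ≤ W` (Loewner order) and `range X ⊆ S^⊥`. -/
def MSet (W : H →L[ℂ] H) (S : Submodule ℂ H) : Set (H →L[ℂ] H) :=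
  {X | X.IsPositive ∧ (W - X).IsPositive ∧ LinearMap.range (X : H →ₗ[ℂ] H) ≤ Sᗮ}

/-- `T` is the shorted operator of `W` to `S`, i.e. the maximum of `M(W,S)` in the Loewner
order. -/
def IsShorted (W : H →L[ℂ] H) (S : Submodule ℂ H) (T : H →L[ℂ] H) : Prop :=
  T ∈ MSet W S ∧ ∀ X ∈ MSet W S, (T - X).IsPositive

/-- The minus order: `A ⁻≤ B` iff there are bounded idempotents `P, Q` with `A = PB` and
`A* = QB*`. -/
def MinusLE (A B : H →L[ℂ] H) : Prop :=
  ∃ P Q : H →L[ℂ] H, IsIdempotentElem P ∧ IsIdempotentElem Q ∧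
    A = P ∘L B ∧ adjoint A = Q ∘L adjoint B

/-- The pair `(W, N)` is compatible: there is a bounded idempotent `Q` with range `N` such that
`WQ` is selfadjoint. -/
def Compatible (W : H →L[ℂ] H) (N : Submodule ℂ H) : Prop :=
  ∃ Q : H →L[ℂ] H, IsIdempotentElem Q ∧ LinearMap.range (Q : H →ₗ[ℂ] H) = N ∧ IsSelfAdjoint (W ∘L Q)

/-- `M⁻(W,S)`: operators `X` with `X ⁻≤ W`, `range X ⊆ S^⊥` and `range X* ⊆ S^⊥`. -/
def MMinusSet (W : H →L[ℂ] H) (S : Submodule ℂ H) : Set (H →L[ℂ] H) :=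
  {X | MinusLE X W ∧ LinearMap.range (X : H →ₗ[ℂ] H) ≤ Sᗮ ∧ LinearMap.range ((adjoint X : H →L[ℂ] H) : H →ₗ[ℂ] H) ≤ Sᗮ}

/-- `X₀` is a `W`-inverse of `M` in `R(C)`: for every `x`, `X₀ x` is a `W`-weighted least squares
solution of `M z = C x`. -/
def WInverseIn (W M C X₀ : H →L[ℂ] H) : Prop :=
  ∀ x z : H, (⟪W (M (X₀ x) - C x), M (X₀ x) - C x⟫).re ≤ (⟪W (M z - C x), M z - C x⟫).re

/-- The left weighted star order `A ₋*_W≤ B`. -/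
def LStarW (W A B : H →L[ℂ] H) : Prop :=
  LinearMap.range ((B : H →L[ℂ] H) : H →ₗ[ℂ] H) = LinearMap.range ((A : H →L[ℂ] H) : H →ₗ[ℂ] H) ⊔ LinearMap.range ((B - A : H →L[ℂ] H) : H →ₗ[ℂ] H) ∧
  LinearMap.range ((A : H →L[ℂ] H) : H →ₗ[ℂ] H) ⊓ LinearMap.range ((B - A : H →L[ℂ] H) : H →ₗ[ℂ] H) = ⊥ ∧
  LinearMap.range ((B - A : H →L[ℂ] H) : H →ₗ[ℂ] H) ≤ LinearMap.ker ((adjoint A ∘L W : H →L[ℂ] H) : H →ₗ[ℂ] H)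

/-- The right weighted star order `A ≤*_W B`. -/
def RStarW (W A B : H →L[ℂ] H) : Prop :=
  LinearMap.range ((adjoint B : H →L[ℂ] H) : H →ₗ[ℂ] H) =
    LinearMap.range ((adjoint A : H →L[ℂ] H) : H →ₗ[ℂ] H) ⊔ LinearMap.range ((adjoint B - adjoint A : H →L[ℂ] H) : H →ₗ[ℂ] H) ∧
  LinearMap.range ((adjoint A : H →L[ℂ] H) : H →ₗ[ℂ] H) ⊓ LinearMap.range ((adjoint B - adjoint A : H →L[ℂ] H) : H →ₗ[ℂ] H) = ⊥ ∧
  LinearMap.range ((adjoint B - adjoint A : H →L[ℂ] H) : H →ₗ[ℂ] H) ≤ LinearMap.ker ((A ∘L W : H →L[ℂ] H) : H →ₗ[ℂ] H)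

/-- The weighted star order `A *_W≤ B`. -/
def StarW (W A B : H →L[ℂ] H) : Prop :=
  LStarW W A B ∧ RStarW W A B

/-!
Write `W = R * R` with `R = √W`. For a closed subspace `N ⊥ R S`, the operator `R P_N R` lies in
`M(W,S)` and hence below `T`; with `N = (R S)ᗮ` this shows that `T x = 0` forces
`R x ∈ closure (R S)`, so every `P W` vanishing on `S` vanishes on `ker T`.

If `Q` is an idempotent onto `ker T` with `W Q` selfadjoint, then `W (1 - Q) = (1 - Q)* W (1 - Q)`
lies in `M(W,S)` and dominates `T = (1 - Q)* T (1 - Q)`, so `T = W (1 - Q)`. Hence `T ⁻≤ W`, and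
every `X = P W` in `M⁻(W,S)` kills `ker T = range Q`, so `X = P T` (likewise for `X*`).

Conversely `T ⁻≤ W` gives `T = W E` with `E` idempotent. Composing with the orthogonal projection
`P` onto `ker W ∩ range E` yields the idempotent `A = (1 - P) E` with `W A = T` and `ker A = ker T`,
and `1 - A` witnesses compatibility.
-/

open Submodule

section Orthogonal

variable {𝕜 E F : Type*} [RCLike 𝕜] [NormedAddCommGroup E] [InnerProductSpace 𝕜 E]
  [NormedAddCommGroup F] [InnerProductSpace 𝕜 F] [CompleteSpace E] [CompleteSpace F]

lemma le_ker_iff_range_adjoint_le_orthogonal (A : E →L[𝕜] F) (S : Submodule 𝕜 E) :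
    S ≤ A.ker ↔ (adjoint A).range ≤ Sᗮ := by
  rw [← adjoint_adjoint A, ← orthogonal_range, adjoint_adjoint, ← isOrtho_iff_le, isOrtho_comm,
    isOrtho_iff_le]

lemma IsSelfAdjoint.range_le_orthogonal_iff {A : E →L[𝕜] E} (hA : IsSelfAdjoint A)
    (S : Submodule 𝕜 E) : A.range ≤ Sᗮ ↔ S ≤ A.ker := by
  rw [le_ker_iff_range_adjoint_le_orthogonal, hA.adjoint_eq]

end Orthogonal

lemma ContinuousLinearMap.mul_one_sub_eq_self_of_range_le_ker {R M : Type*} [Ring R]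
    [TopologicalSpace M] [AddCommGroup M] [IsTopologicalAddGroup M] [Module R M]
    {X Q : M →L[R] M} (h : Q.range ≤ X.ker) : X * (1 - Q) = X := by
  ext x
  simpa [sub_eq_self] using h ⟨x, rfl⟩

lemma IsSelfAdjoint.mul_eq_star_mul_mul {R : Type*} [Monoid R] [StarMul R] {a e : R}
    (ha : IsSelfAdjoint a) (he : IsIdempotentElem e) (hae : IsSelfAdjoint (a * e)) :
    a * e = star e * a * e := by
  conv_lhs => rw [← he.eq, ← mul_assoc, ← hae.star_eq, star_mul, ha.star_eq]

variable {W T : H →L[ℂ] H} {S : Submodule ℂ H}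

lemma IsShorted.le_ker (hT : IsShorted W S T) : S ≤ T.ker :=
  (hT.1.1.isSelfAdjoint.range_le_orthogonal_iff S).1 hT.1.2.2

lemma conj_starProjection_mem_MSet {R : H →L[ℂ] H} (hR : IsSelfAdjoint R) (N : Submodule ℂ H)
    [N.HasOrthogonalProjection] (hN : S.map (R : H →ₗ[ℂ] H) ≤ Nᗮ) :
    R * N.starProjection * R ∈ MSet (R * R) S := by
  have hP : IsStarProjection N.starProjection := isStarProjection_starProjection
  have hX₀ : 0 ≤ R * N.starProjection * R := hR.conjugate_nonneg hP.nonneg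
  refine ⟨(nonneg_iff_isPositive _).1 hX₀, ?_, ?_⟩
  · rw [← nonneg_iff_isPositive, show R * R - R * N.starProjection * R
      = R * (1 - N.starProjection) * R by noncomm_ring]
    exact hR.conjugate_nonneg hP.one_sub.nonneg
  · refine ((IsSelfAdjoint.of_nonneg hX₀).range_le_orthogonal_iff S).2 fun s hs => ?_
    have : N.starProjection (R s) = 0 :=
      N.starProjection_apply_eq_zero_iff.2 (hN ⟨s, hs, rfl⟩)
    simp [this]

lemma IsShorted.apply_mem_topologicalClosure_map {R : H →L[ℂ] H} (hR : IsSelfAdjoint R)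
    (hT : IsShorted (R * R) S T) {x : H} (hx : T x = 0) :
    R x ∈ (S.map (R : H →ₗ[ℂ] H)).topologicalClosure := by
  set M := (S.map (R : H →ₗ[ℂ] H)).topologicalClosure
  have hX₀ := conj_starProjection_mem_MSet hR Mᗮ
    ((le_topologicalClosure _).trans (le_orthogonal_orthogonal M))
  have hle := (hT.2 _ hX₀).re_inner_nonneg_left x
  have hinner : ⟪(R * Mᗮ.starProjection * R) x, x⟫ = ⟪Mᗮ.starProjection (R x), R x⟫ :=
    hR.isSymmetric _ _
  rw [sub_apply, hx, zero_sub, inner_neg_left, map_neg, hinner,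
    re_inner_starProjection_eq_normSq, neg_nonneg] at hle
  have hproj : Mᗮ.starProjection (R x) = 0 := by
    rw [starProjection_apply, norm_eq_zero.1 ((sq_nonpos_iff _).1 hle), ZeroMemClass.coe_zero]
  rwa [starProjection_apply_eq_zero_iff, orthogonal_orthogonal] at hproj

lemma IsShorted.ker_le_ker_of_eq_mul (hW : 0 ≤ W) (hT : IsShorted W S T) {X P : H →L[ℂ] H}
    (hXP : X = P * W) (hXS : S ≤ X.ker) : T.ker ≤ X.ker := by
  set R := CFC.sqrt W
  have hR : IsSelfAdjoint R := .of_nonneg (CFC.sqrt_nonneg W)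
  have hRR : R * R = W := CFC.sqrt_mul_sqrt_self W
  rw [← hRR] at hT hXP
  have hclosure : (S.map (R : H →ₗ[ℂ] H)).topologicalClosure ≤ (P * R).ker := by
    refine topologicalClosure_minimal _ ?_ (isClosed_ker _)
    rintro _ ⟨s, hs, rfl⟩
    simpa [hXP] using hXS hs
  intro x hx
  simpa [hXP] using hclosure (hT.apply_mem_topologicalClosure_map hR hx)

lemma IsShorted.eq_mul_one_sub (hW : 0 ≤ W) (hT : IsShorted W S T) {Q : H →L[ℂ] H}
    (hQ : IsIdempotentElem Q) (hQT : Q.range = T.ker) (hWQ : IsSelfAdjoint (W * Q)) :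
    T = W * (1 - Q) := by
  have hWsa : IsSelfAdjoint W := .of_nonneg hW
  have hTsa : IsSelfAdjoint T := hT.1.1.isSelfAdjoint
  have hE := hQ.one_sub
  have hWE : IsSelfAdjoint (W * (1 - Q)) := by
    rw [mul_sub, mul_one]
    exact hWsa.sub hWQ
  have hTE : T * (1 - Q) = T := mul_one_sub_eq_self_of_range_le_ker hQT.le
  have hmem : W * (1 - Q) ∈ MSet W S := by
    refine ⟨(nonneg_iff_isPositive _).1 ?_, (nonneg_iff_isPositive _).1 ?_, ?_⟩
    · rw [hWsa.mul_eq_star_mul_mul hE hWE]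
      exact star_left_conjugate_nonneg hW _
    · rw [mul_sub, mul_one, sub_sub_cancel, hWsa.mul_eq_star_mul_mul hQ hWQ]
      exact star_left_conjugate_nonneg hW _
    · refine (hWE.range_le_orthogonal_iff S).2 fun s hs => ?_
      obtain ⟨y, rfl⟩ := hQT.ge (hT.le_ker hs)
      have hQy : Q (Q y) = Q y := DFunLike.congr_fun hQ.eq y
      simp [hQy]
  refine le_antisymm ?_ (hT.2 _ hmem)
  calc T = star (1 - Q) * T * (1 - Q) := by
        rw [← hTsa.mul_eq_star_mul_mul hE (by rwa [hTE]), hTE]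
    _ ≤ star (1 - Q) * W * (1 - Q) := star_left_conjugate_le_conjugate hT.1.2.1 _
    _ = W * (1 - Q) := (hWsa.mul_eq_star_mul_mul hE hWE).symm

lemma IsShorted.eq_mul_of_eq_mul (hW : 0 ≤ W) (hT : IsShorted W S T) {Q : H →L[ℂ] H}
    (hQT : Q.range = T.ker) (hTQ : T = W * (1 - Q)) {X P : H →L[ℂ] H} (hXP : X = P * W)
    (hXS : S ≤ X.ker) : X = P * T :=
  calc X = X * (1 - Q) :=
        (mul_one_sub_eq_self_of_range_le_ker <| hQT.trans_le <| hT.ker_le_ker_of_eq_mul hW hXP hXS).symm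
    _ = P * T := by rw [hTQ, hXP, mul_assoc]

lemma IsShorted.mem_MMinusSet_of_eq_mul (hW : IsSelfAdjoint W) (hT : IsShorted W S T)
    {E : H →L[ℂ] H} (hE : IsIdempotentElem E) (hTE : T = W * E) : T ∈ MMinusSet W S := by
  have hTsa : IsSelfAdjoint T := hT.1.1.isSelfAdjoint
  have hTE' : T = star E * W := by rw [← hTsa.star_eq, hTE, star_mul, hW.star_eq]
  refine ⟨⟨_, _, hE.star, hE.star, hTE', ?_⟩, hT.1.2.2, ?_⟩
  · rwa [hTsa.adjoint_eq, hW.adjoint_eq]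
  · rw [hTsa.adjoint_eq]
    exact hT.1.2.2

lemma IsShorted.minusLE_of_mem_MMinusSet (hW : 0 ≤ W) (hT : IsShorted W S T) {Q : H →L[ℂ] H}
    (hQT : Q.range = T.ker) (hTQ : T = W * (1 - Q)) {X : H →L[ℂ] H} (hX : X ∈ MMinusSet W S) :
    MinusLE X T := by
  obtain ⟨⟨P, P', hP, hP', hXP, hXP'⟩, hXS, hXS'⟩ := hX
  rw [(IsSelfAdjoint.of_nonneg hW).adjoint_eq] at hXP'
  refine ⟨P, P', hP, hP', ?_, ?_⟩
  · exact hT.eq_mul_of_eq_mul hW hQT hTQ hXP ((le_ker_iff_range_adjoint_le_orthogonal X S).2 hXS')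
  · rw [hT.1.1.isSelfAdjoint.adjoint_eq]
    exact hT.eq_mul_of_eq_mul hW hQT hTQ hXP'
      ((le_ker_iff_range_adjoint_le_orthogonal _ S).2 (by rwa [adjoint_adjoint]))

lemma compatible_ker_of_eq_mul {W T E : H →L[ℂ] H} (hW : IsSelfAdjoint W) (hT : IsSelfAdjoint T)
    (hE : IsIdempotentElem E) (hTE : T = W * E) : Compatible W T.ker := by
  set K := W.ker ⊓ (1 - E).ker
  have : CompleteSpace K := ((isClosed_ker W).inter (isClosed_ker (1 - E))).completeSpace_coe
  set P := K.starProjection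
  have hWP : W * P = 0 := ext fun x => (mem_inf.1 (K.starProjection_apply_mem x)).1
  have hEP : E * P = P := ext fun x =>
    (sub_eq_zero.1 ((mem_inf.1 (K.starProjection_apply_mem x)).2 : P x - E (P x) = 0)).symm
  have hA : IsIdempotentElem ((1 - P) * E) :=
    calc (1 - P) * E * ((1 - P) * E) = (1 - P) * (E * E) - (1 - P) * (E * P) * E := by
          noncomm_ring
      _ = (1 - P) * (1 - P) * E := by rw [hE.eq, hEP]; noncomm_ring
      _ = (1 - P) * E := by rw [K.isIdempotentElem_starProjection.one_sub.eq]
  set A := (1 - P) * E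
  have hWA : W * A = T := by rw [← mul_assoc, mul_sub, mul_one, hWP, sub_zero, hTE]
  have hker : A.ker = T.ker := by
    ext x
    refine ⟨fun hx => ?_, fun hx => ?_⟩
    · simpa [← hWA] using congr(W $hx)
    · have hEx : E x ∈ K := by
        refine mem_inf.2 ⟨?_, ?_⟩
        · simpa [hTE] using hx
        · exact (sub_eq_zero.2 (DFunLike.congr_fun hE.eq x).symm : E x - E (E x) = 0)
      have hPEx : P (E x) = E x := starProjection_eq_self_iff.2 hEx
      simp [A, hPEx]
  refine ⟨1 - A, hA.one_sub, ?_, ?_⟩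
  · rw [← hker, LinearMap.IsIdempotentElem.ker_eq_range_one_sub hA.toLinearMap, toLinearMap_sub,
      toLinearMap_one]
  · show IsSelfAdjoint (W * (1 - A))
    rw [mul_sub, mul_one, hWA]
    exact hW.sub hT

theorem stmt6_general (W T : H →L[ℂ] H) (S : Submodule ℂ H)
    (hW : W.IsPositive) (hT : IsShorted W S T) :
    Compatible W (LinearMap.ker (T : H →ₗ[ℂ] H)) ↔
      T ∈ MMinusSet W S ∧ ∀ X ∈ MMinusSet W S, MinusLE X T := by
  have hW0 : 0 ≤ W := (nonneg_iff_isPositive W).2 hW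
  have hTsa : IsSelfAdjoint T := hT.1.1.isSelfAdjoint
  constructor
  · rintro ⟨Q, hQ, hQT, hWQ⟩
    have hTQ := hT.eq_mul_one_sub hW0 hQ hQT hWQ
    exact ⟨hT.mem_MMinusSet_of_eq_mul hW.isSelfAdjoint hQ.one_sub hTQ,
      fun X hX => hT.minusLE_of_mem_MMinusSet hW0 hQT hTQ hX⟩
  · rintro ⟨⟨⟨-, E, -, hE, -, hTE⟩, -⟩, -⟩
    rw [hTsa.adjoint_eq, hW.isSelfAdjoint.adjoint_eq] at hTE
    refine compatible_ker_of_eq_mul hW.isSelfAdjoint hTsa hE.star ?_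
    rw [← hTsa.star_eq, hTE, ← ContinuousLinearMap.mul_def, star_mul, hW.isSelfAdjoint.star_eq]

/-- `(W, ker T)` is compatible iff `T` is the maximum of `M⁻(W,S)` for the
minus order. -/
theorem stmt6 (W T : H →L[ℂ] H) (S : Submodule ℂ H) (hS : IsClosed (S : Set H))
    (hW : W.IsPositive) (hT : IsShorted W S T) :
    Compatible W (LinearMap.ker (T : H →ₗ[ℂ] H)) ↔
      T ∈ MMinusSet W S ∧ ∀ X ∈ MMinusSet W S, MinusLE X T :=
  stmt6_general W T S hW hT
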